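/- Let K ∈ ℝ, λ ∈ ℝ, D > 0 and a > 1, and set s = 1 - 1/a ∈ (0, 1). Let f : ℝ → ℝ be twice continuously differentiable on [-D, D] with f(x) > 0 for all x ∈ (-D, D), f(-D) = f(D) = 0, and f''(x) - K x f'(x) = -(λ - K) f(x) for all x ∈ (-D, D). Then, with u = f^{a/2}, one has the identity 4s(1-s) ∫_{-D}^{D} (u'(x))² dx = (λ - K s) ∫_{-D}^{D} u(x)² dx, both integrals being finite. -/

import Mathlib

/-!
The flux `Ψ = f^(a-1) f' - (K/a) x f^a` vanishes at `±D` because `f` does, and along the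
equation its derivative is `(a-1) f^(a-2) f'² - (λ - K s) f^a = 4 s (1-s) u'² - (λ - K s) u²`.
Integrating over `(-D, D)` gives the identity. The delicate point is that `u'²` may blow up at
`±D`; it is integrable all the same, since up to the continuous term `(λ - K s) u²` it is the
nonnegative derivative of a function continuous on `[-D, D]`.
-/

open Real Set MeasureTheory Filter Topology intervalIntegral

theorem intervalIntegrable_and_integral_eq_of_hasDerivAt_add_of_nonneg {G h k : ℝ → ℝ}
    {a b : ℝ} (hab : a ≤ b) (hG : ContinuousOn G (Icc a b)) (hk : ContinuousOn k (Icc a b))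
    (hderiv : ∀ x ∈ Ioo a b, HasDerivAt G (h x + k x) x) (hh : ∀ x ∈ Ioo a b, 0 ≤ h x) :
    IntervalIntegrable h volume a b ∧ ∫ x in a..b, h x = G b - G a - ∫ x in a..b, k x := by
  have hkI : IntervalIntegrable k volume a b := hk.intervalIntegrable_of_Icc hab
  have hP : ∀ x ∈ Ioo a b, HasDerivAt (fun y => ∫ t in a..y, k t) (k x) x := fun x hx =>
    integral_hasDerivAt_right
      ((hk.mono (Icc_subset_Icc_right hx.2.le)).intervalIntegrable_of_Icc hx.1.le)
      ((hk.mono Ioo_subset_Icc_self).stronglyMeasurableAtFilter isOpen_Ioo x hx)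
      (hk.continuousAt (Icc_mem_nhds hx.1 hx.2))
  have hGP : ContinuousOn (fun x => G x - ∫ t in a..x, k t) (Icc a b) := by
    refine hG.sub ?_
    simpa only [uIcc_of_le hab] using continuousOn_primitive_interval' hkI left_mem_uIcc
  have hhI : IntervalIntegrable h volume a b :=
    (intervalIntegrable_iff_integrableOn_Ioc_of_le hab).2 <| integrableOn_deriv_of_nonneg hGP
      (fun x hx => add_sub_cancel_right (h x) (k x) ▸ (hderiv x hx).sub (hP x hx)) hh
  refine ⟨hhI, ?_⟩
  have hftc := integral_eq_sub_of_hasDerivAt_of_le hab hG hderiv (hhI.add hkI)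
  rw [integral_add hhI hkI] at hftc
  linarith

theorem DifferentiableOn.hasDerivAt_derivWithin_Icc {f : ℝ → ℝ} {a b x : ℝ}
    (hf : DifferentiableOn ℝ f (Icc a b)) (hx : x ∈ Ioo a b) :
    HasDerivAt f (derivWithin f (Icc a b) x) x :=
  (hf x (Ioo_subset_Icc_self hx)).hasDerivWithinAt.hasDerivAt (Icc_mem_nhds hx.1 hx.2)

theorem ContDiffOn.hasDerivAt_derivWithin_Icc_deriv {f : ℝ → ℝ} {a b x : ℝ}
    (hf : ContDiffOn ℝ 2 f (Icc a b)) (hx : x ∈ Ioo a b) :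
    HasDerivAt (derivWithin f (Icc a b)) (deriv (deriv f) x) x := by
  have hf' := ((hf.derivWithin (uniqueDiffOn_Icc (hx.1.trans hx.2)) le_rfl).differentiableOn
    one_ne_zero).hasDerivAt_derivWithin_Icc hx
  have heq : deriv f =ᶠ[𝓝 x] derivWithin f (Icc a b) := by
    filter_upwards [isOpen_Ioo.mem_nhds hx] with y hy
    exact ((hf.differentiableOn two_ne_zero).hasDerivAt_derivWithin_Icc hy).deriv
  rwa [(hf'.congr_of_eventuallyEq heq).deriv]

noncomputable def rayleighFlux (K a : ℝ) (f f' : ℝ → ℝ) (x : ℝ) : ℝ :=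
  f x ^ (a - 1) * f' x - K / a * (x * f x ^ a)

theorem rayleighFlux_eq_zero {K a : ℝ} {f f' : ℝ → ℝ} {x : ℝ} (ha : 1 < a)
    (hfx : f x = 0) :
    rayleighFlux K a f f' x = 0 := by
  simp [rayleighFlux, hfx, zero_rpow (sub_ne_zero.2 ha.ne'), zero_rpow (by positivity : a ≠ 0)]

theorem ContinuousOn.rayleighFlux {K a : ℝ} {f f' : ℝ → ℝ} {s : Set ℝ} (ha : 1 ≤ a)
    (hf : ContinuousOn f s) (hf' : ContinuousOn f' s) :
    ContinuousOn (rayleighFlux K a f f') s :=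
  ((hf.rpow_const fun _ _ => Or.inr (by linarith)).mul hf').sub
    (continuousOn_const.mul (continuousOn_id.mul (hf.rpow_const fun _ _ => Or.inr (by linarith))))

theorem hasDerivAt_rayleighFlux {K lam a x f'' : ℝ} {f f' : ℝ → ℝ} (ha : a ≠ 0)
    (hfx : 0 < f x) (hf : HasDerivAt f (f' x) x) (hf' : HasDerivAt f' f'' x)
    (hode : f'' - K * x * f' x = -(lam - K) * f x) :
    HasDerivAt (rayleighFlux K a f f')
      ((a - 1) * f x ^ (a - 2) * f' x ^ 2 - (lam - K * (1 - 1 / a)) * f x ^ a) x := by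
  have hpow (b : ℝ) : HasDerivAt (fun y => f y ^ b) (f' x * b * f x ^ (b - 1)) x :=
    hf.rpow_const (Or.inl hfx.ne')
  refine (((hpow (a - 1)).mul hf').sub
    (((hasDerivAt_id x).mul (hpow a)).const_mul (K / a))).congr_deriv ?_
  have h1 : f x ^ (a - 1) = f x ^ (a - 2) * f x := by
    rw [← rpow_add_one hfx.ne']; ring_nf
  have h2 : f x ^ a = f x ^ (a - 2) * f x * f x := by
    rw [← rpow_add_one hfx.ne', ← rpow_add_one hfx.ne']; ring_nf
  rw [show f'' = K * x * f' x - (lam - K) * f x by linarith, show a - 1 - 1 = a - 2 by ring,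
    h1, h2, id]
  field_simp
  ring

theorem sq_deriv_rpow_half {f : ℝ → ℝ} {a x f' : ℝ} (hfx : 0 < f x)
    (hf : HasDerivAt f f' x) :
    deriv (fun y => f y ^ (a / 2)) x ^ 2 = a ^ 2 / 4 * f x ^ (a - 2) * f' ^ 2 := by
  rw [(hf.rpow_const (p := a / 2) (Or.inl hfx.ne')).deriv, mul_pow, mul_pow,
    ← rpow_mul_natCast hfx.le]
  push_cast
  ring_nf

/-- Rayleigh-quotient identity
`4s(1-s) ∫ (u')² = (λ - Ks) ∫ u²` with `u = f^{a/2}` and `s = 1 - 1/a`, for a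
positive Dirichlet eigenfunction `f` of `f'' - Kxf' = -(λ-K)f` on `(-D, D)`;
both integrals are finite. -/
theorem rayleigh_quotient_identity
    (K lam D a s : ℝ) (hD : 0 < D) (ha : 1 < a) (hs : s = 1 - 1 / a)
    (f : ℝ → ℝ) (hf : ContDiffOn ℝ 2 f (Set.Icc (-D) D))
    (hpos : ∀ x ∈ Set.Ioo (-D) D, 0 < f x)
    (hb1 : f (-D) = 0) (hb2 : f D = 0)
    (hode : ∀ x ∈ Set.Ioo (-D) D,
      deriv (deriv f) x - K * x * deriv f x = -(lam - K) * f x) :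
    IntervalIntegrable (fun x => (deriv (fun y => f y ^ (a / 2)) x) ^ 2) volume (-D) D ∧
    IntervalIntegrable (fun x => (f x ^ (a / 2)) ^ 2) volume (-D) D ∧
    4 * s * (1 - s) * (∫ x in (-D)..D, (deriv (fun y => f y ^ (a / 2)) x) ^ 2)
      = (lam - K * s) * ∫ x in (-D)..D, (f x ^ (a / 2)) ^ 2 := by
  have ha0 : 0 < a := one_pos.trans ha
  have hs0 : 0 < s := by rw [hs, sub_pos, div_lt_one ha0]; exact ha
  have hs1 : 0 < 1 - s := by rw [hs, sub_sub_cancel]; positivity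
  have hc : 0 < 4 * s * (1 - s) := by positivity
  have hderiv : ∀ x ∈ Ioo (-D) D, HasDerivAt (rayleighFlux K a f (derivWithin f (Icc (-D) D)))
      (4 * s * (1 - s) * deriv (fun y => f y ^ (a / 2)) x ^ 2
        + -(lam - K * s) * (f x ^ (a / 2)) ^ 2) x := by
    intro x hx
    have hf1 := (hf.differentiableOn two_ne_zero).hasDerivAt_derivWithin_Icc hx
    refine (hasDerivAt_rayleighFlux ha0.ne' (hpos x hx) hf1
      (hf.hasDerivAt_derivWithin_Icc_deriv hx) (hf1.deriv ▸ hode x hx)).congr_deriv ?_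
    rw [sq_deriv_rpow_half (hpos x hx) hf1, ← rpow_mul_natCast (hpos x hx).le, hs]
    push_cast
    field_simp
    ring
  have hu : ContinuousOn (fun x => (f x ^ (a / 2)) ^ 2) (Icc (-D) D) :=
    (hf.continuousOn.rpow_const fun _ _ => Or.inr (by positivity)).pow 2
  have hflux := hf.continuousOn.rayleighFlux (K := K) ha.le
    (hf.continuousOn_derivWithin (uniqueDiffOn_Icc (by linarith)) (by norm_num))
  obtain ⟨hint, heq⟩ := intervalIntegrable_and_integral_eq_of_hasDerivAt_add_of_nonneg
    (by linarith) hflux (hu.const_mul _) hderiv fun x _ => mul_nonneg hc.le (sq_nonneg _)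
  refine ⟨by simpa only [inv_mul_cancel_left₀ hc.ne'] using
      hint.const_mul (4 * s * (1 - s))⁻¹,
    hu.intervalIntegrable_of_Icc (by linarith), ?_⟩
  rwa [intervalIntegral.integral_const_mul, intervalIntegral.integral_const_mul,
    rayleighFlux_eq_zero ha hb1, rayleighFlux_eq_zero ha hb2, sub_zero, zero_sub, neg_mul,
    neg_neg] at heq
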